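/- arXiv:2001.10749 — 5 statements merged into one kernel-verified Lean document; each statement's English description precedes it below -/
import Mathlib

section
/- Let m ≥ 2 be an integer. For every natural number k not divisible by m, cos²(kπ/m) ≤ cos²(π/m), and moreover cos²(π/m) < 1. Hence the acceptance probability of the 2-state quantum finite automaton 𝒜 on any word a^k not in L_m is bounded above by cos²(π/m), which is strictly smaller than 1. -/
/-! Since `cos²` has period `π`, `k` may be replaced by its residue `r ∈ [1, m)`; then
`rπ/m ∈ [π/m, π - π/m]`, where `|cos|` is at most `cos (π/m)`. -/

open Real

namespace Real

theorem cos_sq_add_nat_mul_pi (x : ℝ) (n : ℕ) : cos (x + n * π) ^ 2 = cos x ^ 2 := by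
  rw [cos_sq, cos_sq x, mul_add, ← mul_assoc, mul_comm (2 : ℝ) n, mul_assoc, cos_add_nat_mul_two_pi]

theorem cos_sq_le_cos_sq_of_mem_Icc {a x : ℝ} (ha : 0 ≤ a) (hx : x ∈ Set.Icc a (π - a)) :
    cos x ^ 2 ≤ cos a ^ 2 := by
  obtain ⟨hax, hxa⟩ := hx
  have upper : cos x ≤ cos a := cos_le_cos_of_nonneg_of_le_pi ha (by linarith) hax
  have lower : -cos a ≤ cos x := by
    rw [← cos_pi_sub]
    exact cos_le_cos_of_nonneg_of_le_pi (by linarith) (by linarith) hxa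
  exact sq_le_sq' lower upper

theorem cos_sq_lt_one_of_pos_of_lt_pi {x : ℝ} (hx0 : 0 < x) (hxπ : x < π) : cos x ^ 2 < 1 := by
  rw [cos_sq']
  linarith [pow_pos (sin_pos_of_pos_of_lt_pi hx0 hxπ) 2]

end Real

theorem cos_sq_nat_mul_pi_div_eq_mod (k m : ℕ) :
    cos (k * π / m) ^ 2 = cos ((k % m : ℕ) * π / m) ^ 2 := by
  rcases Nat.eq_zero_or_pos m with rfl | hm
  · simp
  have hk : (k : ℝ) = (k % m : ℕ) + m * (k / m : ℕ) := by exact_mod_cast (Nat.mod_add_div k m).symm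
  have hsplit : (k : ℝ) * π / m = (k % m : ℕ) * π / m + (k / m : ℕ) * π := by
    rw [hk]; field_simp
  rw [hsplit, cos_sq_add_nat_mul_pi]

theorem cos_sq_nat_mul_pi_div_le {m r : ℕ} (hr0 : 0 < r) (hrm : r < m) :
    cos (r * π / m) ^ 2 ≤ cos (π / m) ^ 2 := by
  have hm : (0 : ℝ) < m := by exact_mod_cast hr0.trans hrm
  have hr1 : (1 : ℝ) ≤ r := by exact_mod_cast hr0
  have hrm1 : (r : ℝ) ≤ m - 1 := by
    have : (r : ℝ) + 1 ≤ m := by exact_mod_cast hrm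
    linarith
  apply cos_sq_le_cos_sq_of_mem_Icc (by positivity)
  constructor
  · rw [div_le_div_iff_of_pos_right hm]
    nlinarith [pi_pos]
  · rw [show π - π / m = (m - 1) * π / m by field_simp, div_le_div_iff_of_pos_right hm]
    nlinarith [pi_pos]

/-- For `m ≥ 2` and `k` not divisible by `m`, the acceptance probability of the 2-state
1qfa `𝒜` on `a^k ∉ L_m` satisfies `cos²(kπ/m) ≤ cos²(π/m) < 1`. -/
theorem acceptance_probability_bound (m : ℕ) (hm : 2 ≤ m) :
    (∀ k : ℕ, ¬ m ∣ k → Real.cos (k * π / m) ^ 2 ≤ Real.cos (π / m) ^ 2) ∧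
    Real.cos (π / m) ^ 2 < 1 := by
  refine ⟨fun k hk => ?_, ?_⟩
  · rw [cos_sq_nat_mul_pi_div_eq_mod]
    exact cos_sq_nat_mul_pi_div_le (Nat.pos_of_ne_zero (mt Nat.dvd_of_mod_eq_zero hk))
      (Nat.mod_lt k (by omega))
  · have hm' : (1 : ℝ) < m := by exact_mod_cast hm
    exact cos_sq_lt_one_of_pos_of_lt_pi (by positivity) (div_lt_self pi_pos hm')
end

section
/- Let m ≥ 2 be an integer, and set p(k) = cos²(kπ/m), λ = (1 + cos²(π/m))/2 and ρ = (1 − cos²(π/m))/2. Then ρ > 0 and for every natural number k: (i) p(k) > λ if and only if m divides k, and (ii) |p(k) − λ| ≥ ρ. Hence the language L_m is accepted by a measure-once one-way quantum finite automaton with two basis states with cut point λ isolated by ρ. -/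
open Real

/-! `cos²` has period `π`, so `cos²(kπ/m)` only depends on `k mod m`. It equals `1` when
`m ∣ k`, and otherwise the angle `rπ/m` with `0 < r < m` lies in `[π/m, π - π/m]`, where `|cos|`
is at most `cos(π/m)`. Hence the values of `p` avoid the open interval `(cos²(π/m), 1)`, whose
midpoint and half-length are `λ` and `ρ`. -/

namespace Real

theorem abs_cos_le_cos_of_le_of_le_pi_sub {a x : ℝ} (ha : 0 ≤ a) (hax : a ≤ x)
    (hxa : x ≤ π - a) : |cos x| ≤ cos a := by
  rw [abs_le]
  constructor
  · rw [neg_le, ← cos_pi_sub]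
    exact cos_le_cos_of_nonneg_of_le_pi ha (by linarith) (by linarith)
  · exact cos_le_cos_of_nonneg_of_le_pi ha (by linarith) hax

theorem abs_cos_add_nat_mul_pi (x : ℝ) (n : ℕ) : |cos (x + n * π)| = |cos x| := by
  rw [cos_add_nat_mul_pi, abs_mul, abs_pow, abs_neg, abs_one, one_pow, one_mul]

theorem cos_sq_nat_mul_pi_div_of_dvd {m k : ℕ} (h : m ∣ k) : cos (k * π / m) ^ 2 = 1 := by
  rcases eq_or_ne m 0 with rfl | hm
  · simp
  obtain ⟨q, rfl⟩ := h
  have hangle : ((m * q : ℕ) : ℝ) * π / m = 0 + q * π := by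
    push_cast
    field_simp
    ring
  rw [← sq_abs, hangle, abs_cos_add_nat_mul_pi, cos_zero, abs_one, one_pow]

theorem abs_cos_nat_mul_pi_div_le {m k : ℕ} (h : ¬ m ∣ k) :
    |cos (k * π / m)| ≤ cos (π / m) := by
  rcases Nat.eq_zero_or_pos m with rfl | hm
  · simp
  have hr0 : 1 ≤ k % m := Nat.pos_of_ne_zero fun h0 => h (Nat.dvd_of_mod_eq_zero h0)
  have hrm : k % m + 1 ≤ m := Nat.mod_lt k hm
  have hangle : (k : ℝ) * π / m = (k % m : ℕ) * π / m + (k / m : ℕ) * π := by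
    conv_lhs => rw [← Nat.mod_add_div k m]
    push_cast
    field_simp
  rw [hangle, abs_cos_add_nat_mul_pi]
  apply abs_cos_le_cos_of_le_of_le_pi_sub (by positivity)
  · gcongr
    exact le_mul_of_one_le_left pi_pos.le (by exact_mod_cast hr0)
  · have hr : ((k % m : ℕ) : ℝ) ≤ m - 1 := by
      rw [le_sub_iff_add_le]
      exact_mod_cast hrm
    calc ((k % m : ℕ) : ℝ) * π / m ≤ (m - 1) * π / m := by gcongr
      _ = π - π / m := by field_simp

theorem cos_sq_pi_div_lt_one {m : ℕ} (hm : 2 ≤ m) : cos (π / m) ^ 2 < 1 := by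
  have hm' : (2 : ℝ) ≤ m := by exact_mod_cast hm
  have hsin : 0 < sin (π / m) := by
    apply sin_pos_of_pos_of_lt_pi (by positivity)
    rw [div_lt_iff₀ (by linarith)]
    nlinarith [pi_pos]
  nlinarith [sin_sq_add_cos_sq (π / m)]

end Real

/-- The language `L_m` is accepted by the 2-basis-state 1qfa `𝒜`, whose acceptance
probability on `a^k` is `p(k) = cos²(kπ/m)`, with cut point `λ = (1 + cos²(π/m))/2`
isolated by `ρ = (1 − cos²(π/m))/2 > 0`. -/
theorem isolated_cut_point (m : ℕ) (hm : 2 ≤ m)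
    (p : ℕ → ℝ) (hp : ∀ k, p k = Real.cos (k * π / m) ^ 2)
    (lam rho : ℝ)
    (hlam : lam = (1 + Real.cos (π / m) ^ 2) / 2)
    (hrho : rho = (1 - Real.cos (π / m) ^ 2) / 2) :
    0 < rho ∧ ∀ k : ℕ, (p k > lam ↔ m ∣ k) ∧ |p k - lam| ≥ rho := by
  have hlt := cos_sq_pi_div_lt_one hm
  refine ⟨by linarith, fun k => ?_⟩
  by_cases hk : m ∣ k
  · have hpk : p k = 1 := by rw [hp, cos_sq_nat_mul_pi_div_of_dvd hk]
    rw [hpk, abs_of_nonneg (by linarith)]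
    exact ⟨iff_of_true (by linarith) hk, by linarith⟩
  · have hpk : p k ≤ cos (π / m) ^ 2 := by
      rw [hp, ← sq_abs]
      exact pow_le_pow_left₀ (abs_nonneg _) (abs_cos_nat_mul_pi_div_le hk) 2
    rw [abs_of_neg (by linarith)]
    exact ⟨iff_of_false (by linarith) hk, by linarith⟩
end

section
/- Let m > 0 be a natural number and let M be a deterministic finite automaton over the one-letter alphabet Unit with a finite state type σ. If the language accepted by M equals { w : m ∣ w.length }, then M has at least m states, i.e., Fintype.card σ ≥ m. -/
/-!
The states reached after reading `i` letters, for `i < m`, are pairwise distinct: by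
Myhill–Nerode, a DFA has at least as many states as its language has distinct left quotients,
and appending `m - i` letters separates `aⁱ` from `aʲ` in `{w | m ∣ |w|}` whenever `i ≠ j < m`.
-/

theorem DFA.card_le_of_injective_leftQuotient {α σ ι : Type*} [Fintype ι] [Fintype σ]
    (M : DFA α σ) (x : ι → List α) (hx : Function.Injective (M.accepts.leftQuotient ∘ x)) :
    Fintype.card ι ≤ Fintype.card σ := by
  rw [Language.leftQuotient_accepts, Function.comp_assoc] at hx
  exact Fintype.card_le_of_injective _ hx.of_comp

theorem Language.injective_leftQuotient_replicate_dvd_length {α : Type*} (m : ℕ) (a : α) :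
    Function.Injective fun i : Fin m =>
      Language.leftQuotient ({w | m ∣ w.length} : Language α) (List.replicate i a) := by
  intro i j hij
  have hmem (k : ℕ) : List.replicate (m - i) a ∈
      Language.leftQuotient ({w | m ∣ w.length} : Language α) (List.replicate k a) ↔
        m ∣ k + (m - i) := by
    show m ∣ (List.replicate k a ++ List.replicate (m - i) a).length ↔ _
    rw [List.length_append, List.length_replicate, List.length_replicate]
  have hi : m ∣ i + (m - i) := ⟨1, by omega⟩
  have hj : m ∣ j + (m - i) := (hmem j).1 (by dsimp only at hij; exact hij ▸ (hmem i).2 hi)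
  have hmod : (i : ℕ) ≡ j [MOD m] :=
    Nat.ModEq.add_right_cancel' (m - i)
      ((Nat.modEq_zero_iff_dvd.2 hi).trans (Nat.modEq_zero_iff_dvd.2 hj).symm)
  rwa [Nat.ModEq, Nat.mod_eq_of_lt i.isLt, Nat.mod_eq_of_lt j.isLt, ← Fin.ext_iff] at hmod

theorem dfa_Lm_states_lower_bound_general (m : ℕ)
    {σ : Type*} [Fintype σ] (M : DFA Unit σ)
    (hM : M.accepts = {w : List Unit | m ∣ w.length}) :
    m ≤ Fintype.card σ := by
  have hsep := Language.injective_leftQuotient_replicate_dvd_length m ()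
  rw [← hM] at hsep
  simpa using M.card_le_of_injective_leftQuotient _ hsep

/-- Any DFA over the one-letter alphabet `Unit` accepting the unary language
`L_m = { w | m ∣ w.length }` has at least `m` states. -/
theorem dfa_Lm_states_lower_bound (m : ℕ) (hm : 0 < m)
    {σ : Type*} [Fintype σ] (M : DFA Unit σ)
    (hM : M.accepts = {w : List Unit | m ∣ w.length}) :
    m ≤ Fintype.card σ :=
  dfa_Lm_states_lower_bound_general m M hM
end

section
/- Let m > 0 be a natural number and let N be a nondeterministic finite automaton over the one-letter alphabet Unit with a finite state type σ. If the language accepted by N equals { w : m ∣ w.length }, then N has at least m states, i.e., Fintype.card σ ≥ m. -/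
/-!
Fooling-set argument: for `i, j < m`, the word `()^i ++ ()^(m - j)` lies in `L_m` exactly when
`i = j`. If an accepting run of `()^i ++ ()^(m - i)` and one of `()^j ++ ()^(m - j)` passed
through the same state at the seam, the two tails could be swapped, giving `i = j`; so the
`m` words `()^i` need `m` distinct states.
-/

namespace Language

variable {α ι : Type*}

structure IsFoolingSet (L : Language α) (x y : ι → List α) : Prop where
  append_mem (i : ι) : x i ++ y i ∈ L
  eq_of_append_mem (i j : ι) : x i ++ y j ∈ L → x j ++ y i ∈ L → i = j

end Language

namespace NFA

variable {α σ : Type*} (M : NFA α σ)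

theorem append_mem_accepts_iff {x y : List α} :
    x ++ y ∈ M.accepts ↔ ∃ q ∈ M.eval x, y ∈ M.acceptsFrom {q} := by
  rw [accepts_eq_acceptsFrom_start, append_mem_acceptsFrom, mem_acceptsFrom]
  simp_rw [mem_evalFrom_iff_exists (S := M.evalFrom M.start x), mem_acceptsFrom]
  exact ⟨fun ⟨s, hs, q, hq, hsq⟩ => ⟨q, hq, s, hs, hsq⟩,
    fun ⟨q, hq, s, hs, hsq⟩ => ⟨s, hs, q, hq, hsq⟩⟩

theorem card_le_card_of_isFoolingSet {ι : Type*} [Fintype ι] [Fintype σ] {x y : ι → List α}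
    (h : M.accepts.IsFoolingSet x y) : Fintype.card ι ≤ Fintype.card σ := by
  have hmid (i : ι) : ∃ q ∈ M.eval (x i), y i ∈ M.acceptsFrom {q} :=
    M.append_mem_accepts_iff.1 (h.append_mem i)
  choose q hq_eval hq_accepts using hmid
  refine Fintype.card_le_of_injective q fun i j hij => h.eq_of_append_mem i j ?_ ?_
  · exact M.append_mem_accepts_iff.2 ⟨q i, hq_eval i, hij ▸ hq_accepts j⟩
  · exact M.append_mem_accepts_iff.2 ⟨q j, hq_eval j, hij ▸ hq_accepts i⟩

end NFA

-- `0 < i + (m - j) < 2 * m`, so this multiple of `m` can only be `m` itself.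
theorem Nat.eq_of_dvd_add_sub {m i j : ℕ} (hi : i < m) (hj : j < m) (h : m ∣ i + (m - j)) :
    i = j := by
  obtain ⟨k, hk⟩ := h
  rcases k with _ | _ | k
  · omega
  · omega
  · have : 2 * m ≤ m * (k + 1 + 1) := by nlinarith
    omega

theorem isFoolingSet_replicate_unit (m : ℕ) :
    Language.IsFoolingSet {w : List Unit | m ∣ w.length}
      (fun i : Fin m => List.replicate i ()) (fun i => List.replicate (m - i) ()) where
  append_mem i := by
    show m ∣ (List.replicate i () ++ List.replicate (m - i) ()).length
    rw [List.length_append, List.length_replicate, List.length_replicate,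
      Nat.add_sub_cancel' i.is_lt.le]
  eq_of_append_mem i j hij _ := by
    have hdvd : m ∣ (List.replicate i () ++ List.replicate (m - j) ()).length := hij
    rw [List.length_append, List.length_replicate, List.length_replicate] at hdvd
    exact Fin.ext (Nat.eq_of_dvd_add_sub i.is_lt j.is_lt hdvd)

theorem nfa_Lm_states_lower_bound_general (m : ℕ)
    {σ : Type*} [Fintype σ] (N : NFA Unit σ)
    (hN : N.accepts = {w : List Unit | m ∣ w.length}) :
    m ≤ Fintype.card σ := by
  have h := N.card_le_card_of_isFoolingSet (hN ▸ isFoolingSet_replicate_unit m)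
  rwa [Fintype.card_fin] at h

/-- Any NFA over the one-letter alphabet `Unit` accepting the unary language
`L_m = { w | m ∣ w.length }` has at least `m` states. -/
theorem nfa_Lm_states_lower_bound (m : ℕ) (hm : 0 < m)
    {σ : Type*} [Fintype σ] (N : NFA Unit σ)
    (hN : N.accepts = {w : List Unit | m ∣ w.length}) :
    m ≤ Fintype.card σ :=
  nfa_Lm_states_lower_bound_general m N hN
end

section
/- Let m ≥ 3 be an integer and μ₀ > 0 a real number. Set c = cos(π/m), s = sin(π/m), μ₁ = μ₀·c², and N_th = μ₀·|c|·√(1 − ln(c²)/(μ₀·s²)). Then the two Gaussian probability density functions with mean and variance both equal to μ₀, respectively both equal to μ₁, take the same value at x = N_th: (1/√(2π·μ₀))·exp(−(N_th − μ₀)²/(2μ₀)) = (1/√(2π·μ₁))·exp(−(N_th − μ₁)²/(2μ₁)). -/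
open Real

/-!
Write `μ₁ = μ₀ c²` with `0 < c < 1`. The normalising factors of the two densities differ by the
factor `c`, so the densities agree exactly where the exponents differ by `log c`. Expanding the
squares, that difference is `(1 - c²)/2 · (x²/(μ₀ c²) - μ₀)`, so equality holds iff
`x² = μ₀² c² (1 - log (c²)/(μ₀ s²))`, which is `N_th²`. For `m ≥ 3` the angle `π/m` lies in
`(0, π/2)`, so `c > 0` and `s ≠ 0`.
-/

noncomputable def gaussianPDFMeanEqVar (μ x : ℝ) : ℝ :=
  1 / √(2 * π * μ) * exp (-(x - μ) ^ 2 / (2 * μ))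

lemma gaussianPDFMeanEqVar_mul_sq {μ c : ℝ} (hμ : 0 < μ) (hc : 0 < c) (x : ℝ) :
    gaussianPDFMeanEqVar (μ * c ^ 2) x =
      1 / √(2 * π * μ) * exp (-(x - μ * c ^ 2) ^ 2 / (2 * (μ * c ^ 2)) - log c) := by
  have hsqrt : √(2 * π * (μ * c ^ 2)) = √(2 * π * μ) * c := by
    rw [← mul_assoc, sqrt_mul (by positivity), sqrt_sq hc.le]
  have hne : √(2 * π * μ) ≠ 0 := by positivity
  rw [gaussianPDFMeanEqVar, hsqrt, exp_sub, exp_log hc]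
  field_simp

lemma neg_sq_div_eq_neg_sq_div_mul_sq_sub {μ c s x L : ℝ} (hμ : μ ≠ 0) (hc : c ≠ 0) (hs : s ≠ 0)
    (hsc : s ^ 2 + c ^ 2 = 1) (hx : x ^ 2 = μ ^ 2 * c ^ 2 * (1 - 2 * L / (μ * s ^ 2))) :
    -(x - μ) ^ 2 / (2 * μ) = -(x - μ * c ^ 2) ^ 2 / (2 * (μ * c ^ 2)) - L := by
  have hx' : x ^ 2 * s ^ 2 = μ ^ 2 * c ^ 2 * s ^ 2 - 2 * μ * c ^ 2 * L := by
    rw [hx]; field_simp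
  field_simp
  linear_combination hx' - (x ^ 2 - μ ^ 2 * c ^ 2) * hsc

lemma gaussianPDFMeanEqVar_eq_mul_sq {μ c s x : ℝ} (hμ : 0 < μ) (hc : 0 < c) (hs : s ≠ 0)
    (hsc : s ^ 2 + c ^ 2 = 1) (hx : x ^ 2 = μ ^ 2 * c ^ 2 * (1 - log (c ^ 2) / (μ * s ^ 2))) :
    gaussianPDFMeanEqVar μ x = gaussianPDFMeanEqVar (μ * c ^ 2) x := by
  rw [log_pow, Nat.cast_ofNat] at hx
  rw [gaussianPDFMeanEqVar_mul_sq hμ hc, gaussianPDFMeanEqVar,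
    neg_sq_div_eq_neg_sq_div_mul_sq_sub hμ.ne' hc.ne' hs hsc hx]

lemma sq_mul_abs_mul_sqrt_one_sub_log_sq {μ c s : ℝ} (hμ : 0 < μ) (hc : c ^ 2 ≤ 1) :
    (μ * |c| * √(1 - log (c ^ 2) / (μ * s ^ 2))) ^ 2 =
      μ ^ 2 * c ^ 2 * (1 - log (c ^ 2) / (μ * s ^ 2)) := by
  have hlog : log (c ^ 2) / (μ * s ^ 2) ≤ 0 :=
    div_nonpos_of_nonpos_of_nonneg (log_nonpos (sq_nonneg c) hc) (by positivity)
  rw [mul_pow, mul_pow, sq_abs, sq_sqrt (by linarith)]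

lemma cos_pi_div_pos {m : ℕ} (hm : 3 ≤ m) : 0 < cos (π / m) := by
  have hm' : (2 : ℝ) < m := by exact_mod_cast hm
  refine cos_pos_of_mem_Ioo ⟨by linarith [pi_pos, div_pos pi_pos (by linarith : (0 : ℝ) < m)], ?_⟩
  exact div_lt_div_of_pos_left pi_pos two_pos hm'

lemma sin_pi_div_pos {m : ℕ} (hm : 2 ≤ m) : 0 < sin (π / m) := by
  have hm' : (1 : ℝ) < m := by exact_mod_cast hm
  refine sin_pos_of_pos_of_lt_pi (div_pos pi_pos (by linarith)) ?_
  exact div_lt_self pi_pos hm'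

/-- The threshold `N_th = μ₀·|c|·√(1 − ln(c²)/(μ₀·s²))` is the intersection point of the
two Gaussian densities with mean = variance = `μ₀` and mean = variance = `μ₁ = μ₀·c²`,
where `c = cos(π/m)` and `s = sin(π/m)`. -/
theorem gaussians_intersect_at_threshold (m : ℕ) (hm : 3 ≤ m) (μ₀ : ℝ) (hμ₀ : 0 < μ₀)
    (c s μ₁ Nth : ℝ)
    (hc : c = Real.cos (π / m)) (hs : s = Real.sin (π / m))
    (hμ₁ : μ₁ = μ₀ * c ^ 2)
    (hNth : Nth = μ₀ * |c| * Real.sqrt (1 - Real.log (c ^ 2) / (μ₀ * s ^ 2))) :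
    (1 / Real.sqrt (2 * π * μ₀)) * Real.exp (-(Nth - μ₀) ^ 2 / (2 * μ₀)) =
    (1 / Real.sqrt (2 * π * μ₁)) * Real.exp (-(Nth - μ₁) ^ 2 / (2 * μ₁)) := by
  have hsc : s ^ 2 + c ^ 2 = 1 := by rw [hs, hc]; exact sin_sq_add_cos_sq _
  have hc_pos : 0 < c := hc ▸ cos_pi_div_pos hm
  have hs_ne : s ≠ 0 := hs ▸ (sin_pi_div_pos (by omega)).ne'
  subst hμ₁ hNth
  exact gaussianPDFMeanEqVar_eq_mul_sq hμ₀ hc_pos hs_ne hsc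
    (sq_mul_abs_mul_sqrt_one_sub_log_sq hμ₀ (by linarith [sq_nonneg s]))
end
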